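/- Let v be continuous on closure(B₁⁺), harmonic in B₁⁺ = B₁ ∩ {x_d > 0}, vanishing on the contact set Λ ⊂ B₁' := B₁ ∩ {x_d = 0}, satisfying in the viscosity sense ∇v·W = 0 on B₁' \ Λ for a unit vector W with W_d > 0. Let x₀ ∈ B₁' with v(x₀) > 0 and let h_{x₀}(x) := |P_{W⊥}(x−x₀)|² − (d−1)x_d². Then for every neighborhood U of x₀ with closure(U) ⊂ B₁, there exists y ∈ ∂U ∩ {x_d > 0} such that v(y) ≥ h_{x₀}(y). -/

import Mathlib

open Metric Set Filter
open scoped RealInnerProductSpace Topology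

noncomputable section

abbrev E (d : ℕ) := EuclideanSpace ℝ (Fin d)

/-- The Laplacian as the trace of the second derivative. -/
def laplacian {d : ℕ} (f : E d → ℝ) (x : E d) : ℝ :=
  ∑ i : Fin d, iteratedFDeriv ℝ 2 f x ![EuclideanSpace.single i 1, EuclideanSpace.single i 1]

/-- `φ` touches `v` from below at `x₀` within the set `s`. -/
def TouchesFromBelowWithin {d : ℕ} (s : Set (E d)) (φ v : E d → ℝ) (x₀ : E d) : Prop :=
  φ x₀ = v x₀ ∧ ∀ᶠ x in 𝓝[s] x₀, φ x ≤ v x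

/-- `φ` touches `v` from above at `x₀` within the set `s`. -/
def TouchesFromAboveWithin {d : ℕ} (s : Set (E d)) (φ v : E d → ℝ) (x₀ : E d) : Prop :=
  φ x₀ = v x₀ ∧ ∀ᶠ x in 𝓝[s] x₀, v x ≤ φ x

/-- The barrier `h_{x₀}(x) = |P_{W⊥}(x−x₀)|² − (d−1)x_d²` (ambient space `ℝ^(d+1)`). -/
def hBarrier {d : ℕ} (x₀ W : E (d+1)) (x : E (d+1)) : ℝ :=
  ‖x - x₀‖ ^ 2 - ⟪x - x₀, W⟫ ^ 2 - d * (x (Fin.last d)) ^ 2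

/-! ### Auxiliary calculus lemmas for quadratic polynomials -/

section QuadAux

variable {m : ℕ} {ι : Type*} [Fintype ι]

theorem hasFDerivAt_inner_sub (x₀ w : E m) (x : E m) :
    HasFDerivAt (fun x : E m => ⟪x - x₀, w⟫) (innerSL ℝ w) x := by
  have h : HasFDerivAt (fun x : E m => x - x₀) (ContinuousLinearMap.id ℝ (E m)) x :=
    (hasFDerivAt_id x).sub_const x₀
  have h2 := ((innerSL ℝ w).hasFDerivAt (x := x - x₀)).comp x h
  have h3 : (innerSL ℝ w ∘ fun x : E m => x - x₀) = fun x : E m => ⟪x - x₀, w⟫ := by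
    ext y; simp [Function.comp, mul_comm]; exact real_inner_comm _ _
  rw [h3] at h2
  simpa using h2

theorem piece_hasFDerivAt (x₀ w : E m) (a b : ℝ) (x : E m) :
    HasFDerivAt (fun x : E m => a * ⟪x - x₀, w⟫^2 + b * ⟪x - x₀, w⟫)
      ((2*a*⟪x - x₀, w⟫ + b) • innerSL ℝ w) x := by
  have h := hasFDerivAt_inner_sub x₀ w x
  have h2 := ((h.mul h).const_mul a).add (h.const_mul b)
  refine (h2.congr_fderiv ?_).congr_of_eventuallyEq (Filter.Eventually.of_forall fun y => ?_)
  · ext y; simp; ring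
  · simp [pow_two]

/-- the quadratic family -/
def qf (x₀ : E m) (w : ι → E m) (a b : ι → ℝ) (c : ℝ) : E m → ℝ :=
  fun x => c + ∑ k : ι, (a k * ⟪x - x₀, w k⟫^2 + b k * ⟪x - x₀, w k⟫)

def qfG (x₀ : E m) (w : ι → E m) (a b : ι → ℝ) (x : E m) : E m →L[ℝ] ℝ :=
  ∑ k : ι, (2 * a k * ⟪x - x₀, w k⟫ + b k) • innerSL ℝ (w k)

def qfD (w : ι → E m) (a : ι → ℝ) : E m →L[ℝ] (E m →L[ℝ] ℝ) :=
  ∑ k : ι, (2 * a k) • (innerSL ℝ (w k)).smulRight (innerSL ℝ (w k))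

theorem qf_contDiff (x₀ : E m) (w : ι → E m) (a b : ι → ℝ) (c : ℝ) :
    ContDiff ℝ (⊤ : ℕ∞) (qf x₀ w a b c) := by
  refine contDiff_const.add (ContDiff.sum fun k _ => ?_)
  have h : ContDiff ℝ (⊤ : ℕ∞) (fun x : E m => ⟪x - x₀, w k⟫) :=
    ContDiff.inner ℝ (contDiff_id.sub contDiff_const) contDiff_const
  exact ((h.pow 2).const_smul (a k)).add (h.const_smul (b k))

theorem qf_hasFDerivAt (x₀ : E m) (w : ι → E m) (a b : ι → ℝ) (c : ℝ) (x : E m) :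
    HasFDerivAt (qf x₀ w a b c) (qfG x₀ w a b x) x :=
  (HasFDerivAt.fun_sum fun k _ => piece_hasFDerivAt x₀ (w k) (a k) (b k) x).const_add c

theorem qf_fderiv (x₀ : E m) (w : ι → E m) (a b : ι → ℝ) (c : ℝ) (x : E m) :
    fderiv ℝ (qf x₀ w a b c) x = qfG x₀ w a b x :=
  (qf_hasFDerivAt x₀ w a b c x).fderiv

theorem qfG_hasFDerivAt (x₀ : E m) (w : ι → E m) (a b : ι → ℝ) (x : E m) :
    HasFDerivAt (qfG x₀ w a b) (qfD w a) x := by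
  have key : qfG x₀ w a b = fun x => qfD w a (x - x₀) + qfG x₀ w a b x₀ := by
    funext y
    simp only [qfG, qfD]
    rw [ContinuousLinearMap.sum_apply]
    rw [← Finset.sum_add_distrib]
    refine Finset.sum_congr rfl fun k _ => ?_
    ext u
    simp only [ContinuousLinearMap.smul_apply, ContinuousLinearMap.smulRight_apply,
      innerSL_apply_apply, smul_eq_mul, sub_self, inner_zero_left, ContinuousLinearMap.add_apply]
    rw [real_inner_comm (w k) (y - x₀)]
    ring
  rw [key]
  have h : HasFDerivAt (fun x : E m => x - x₀) (ContinuousLinearMap.id ℝ (E m)) x :=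
    (hasFDerivAt_id x).sub_const x₀
  have h2 := ((qfD w a).hasFDerivAt (x := x - x₀)).comp x h
  have h3 := h2.add_const (qfG x₀ w a b x₀)
  simp only [Function.comp_def, ContinuousLinearMap.comp_id] at h3
  exact h3

theorem qf_iter2 (x₀ : E m) (w : ι → E m) (a b : ι → ℝ) (c : ℝ) (x u : E m) :
    iteratedFDeriv ℝ 2 (qf x₀ w a b c) x ![u, u] = ∑ k : ι, 2 * a k * (⟪w k, u⟫ * ⟪w k, u⟫) := by
  rw [iteratedFDeriv_two_apply]
  have hf : fderiv ℝ (qf x₀ w a b c) = qfG x₀ w a b := funext (qf_fderiv x₀ w a b c)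
  rw [hf, (qfG_hasFDerivAt x₀ w a b x).fderiv]
  simp only [Matrix.cons_val_zero, Matrix.cons_val_one, Matrix.head_cons, qfD,
    ContinuousLinearMap.sum_apply, ContinuousLinearMap.smul_apply,
    ContinuousLinearMap.smulRight_apply, innerSL_apply_apply, smul_eq_mul]

theorem norm_sq_sum_inner_single (w : E m) :
    ∑ i : Fin m, ⟪w, EuclideanSpace.single i (1:ℝ)⟫ * ⟪w, EuclideanSpace.single i (1:ℝ)⟫
      = ‖w‖^2 := by
  have h : ∀ i : Fin m, ⟪w, EuclideanSpace.single i (1:ℝ)⟫ = w i := by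
    intro i; simp [EuclideanSpace.inner_single_right]
  simp only [h]
  rw [EuclideanSpace.norm_eq, Real.sq_sqrt (Finset.sum_nonneg fun i _ => sq_nonneg _)]
  simp [Real.norm_eq_abs, sq_abs, sq]

theorem qf_laplacian (x₀ : E m) (w : ι → E m) (a b : ι → ℝ) (c : ℝ) (x : E m) :
    laplacian (qf x₀ w a b c) x = ∑ k : ι, 2 * a k * ‖w k‖^2 := by
  unfold laplacian
  simp only [qf_iter2]
  rw [Finset.sum_comm]
  refine Finset.sum_congr rfl fun k _ => ?_
  rw [← Finset.mul_sum, norm_sq_sum_inner_single]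

theorem inner_gradient_eq (f : E m → ℝ) (x y : E m) : ⟪gradient f x, y⟫ = fderiv ℝ f x y := by
  show ⟪(InnerProductSpace.toDual ℝ (E m)).symm (fderiv ℝ f x), y⟫ = _
  rw [← InnerProductSpace.toDual_apply_apply, LinearIsometryEquiv.apply_symm_apply]

theorem qf_inner_gradient (x₀ : E m) (w : ι → E m) (a b : ι → ℝ) (c : ℝ) (x y : E m) :
    ⟪gradient (qf x₀ w a b c) x, y⟫
      = ∑ k : ι, (2 * a k * ⟪x - x₀, w k⟫ + b k) * ⟪w k, y⟫ := by
  rw [inner_gradient_eq, qf_fderiv]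
  simp only [qfG, ContinuousLinearMap.sum_apply, ContinuousLinearMap.smul_apply,
    innerSL_apply_apply, smul_eq_mul]

end QuadAux

/-! ### The concrete test function -/

section Phi

variable (d : ℕ)

def wfun (W : E (d+1)) : (Fin (d+1) ⊕ Fin 2) → E (d+1) :=
  Sum.elim (fun i => EuclideanSpace.single i 1) ![W, EuclideanSpace.single (Fin.last d) 1]

def afun (η : ℝ) : (Fin (d+1) ⊕ Fin 2) → ℝ := Sum.elim (fun _ => 1 - η) ![-1, -(d:ℝ)]

def bfun (ε : ℝ) : (Fin (d+1) ⊕ Fin 2) → ℝ := Sum.elim (fun _ => 0) ![-ε, 0]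

/-- the test function -/
def phiT (x₀ W : E (d+1)) (ε η c : ℝ) : E (d+1) → ℝ :=
  qf x₀ (wfun d W) (afun d η) (bfun d ε) c

theorem phiT_contDiff (x₀ W : E (d+1)) (ε η c : ℝ) : ContDiff ℝ (⊤ : ℕ∞) (phiT d x₀ W ε η c) :=
  qf_contDiff _ _ _ _ _

theorem inner_sub_last (x₀ : E (d+1)) (hx₀d : x₀ (Fin.last d) = 0) (x : E (d+1)) :
    ⟪x - x₀, EuclideanSpace.single (Fin.last d) (1:ℝ)⟫ = x (Fin.last d) := by
  rw [EuclideanSpace.inner_single_right]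
  have : (x - x₀) (Fin.last d) = x (Fin.last d) - x₀ (Fin.last d) := rfl
  simp [this, hx₀d]

theorem phiT_eq (x₀ W : E (d+1)) (hx₀d : x₀ (Fin.last d) = 0) (ε η c : ℝ) (x : E (d+1)) :
    phiT d x₀ W ε η c x
      = c + hBarrier x₀ W x - ε * ⟪x - x₀, W⟫ - η * ‖x - x₀‖^2 := by
  unfold phiT qf wfun afun bfun
  rw [Fintype.sum_sum_type, Fin.sum_univ_two]
  simp only [Sum.elim_inl, Sum.elim_inr, Matrix.cons_val_zero, Matrix.cons_val_one,
    Matrix.head_cons, zero_mul, add_zero, mul_zero]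
  have hsum : ∑ i : Fin (d+1), (1-η) * ⟪x - x₀, EuclideanSpace.single i (1:ℝ)⟫^2
      = (1-η) * ‖x - x₀‖^2 := by
    rw [← Finset.mul_sum]
    congr 1
    rw [← norm_sq_sum_inner_single (x - x₀)]
    exact Finset.sum_congr rfl fun i _ => by rw [pow_two]
  rw [hsum, inner_sub_last d x₀ hx₀d x]
  unfold hBarrier
  ring

theorem phiT_laplacian (x₀ W : E (d+1)) (hW : ‖W‖ = 1) (ε η c : ℝ) (x : E (d+1)) :
    laplacian (phiT d x₀ W ε η c) x = -(2 * η * (d+1)) := by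
  unfold phiT
  rw [qf_laplacian]
  unfold wfun afun
  rw [Fintype.sum_sum_type, Fin.sum_univ_two]
  simp only [Sum.elim_inl, Sum.elim_inr, Matrix.cons_val_zero, Matrix.cons_val_one,
    Matrix.head_cons, EuclideanSpace.norm_single, norm_one, one_pow, mul_one, hW]
  rw [Finset.sum_const, Finset.card_univ, Fintype.card_fin]
  push_cast
  ring

theorem phiT_grad (x₀ W : E (d+1)) (hW : ‖W‖ = 1) (hx₀d : x₀ (Fin.last d) = 0)
    (ε η c : ℝ) (z : E (d+1)) (hz : z (Fin.last d) = 0) :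
    ⟪gradient (phiT d x₀ W ε η c) z, W⟫ = -(2 * η * ⟪z - x₀, W⟫) - ε := by
  unfold phiT
  rw [qf_inner_gradient]
  unfold wfun afun bfun
  rw [Fintype.sum_sum_type, Fin.sum_univ_two]
  simp only [Sum.elim_inl, Sum.elim_inr, Matrix.cons_val_zero, Matrix.cons_val_one,
    Matrix.head_cons, add_zero, zero_mul, mul_zero]
  have h1 : ∀ i : Fin (d+1), ⟪EuclideanSpace.single i (1:ℝ), W⟫ = W i := by
    intro i; simp [EuclideanSpace.inner_single_left]
  have h2 : ∀ i : Fin (d+1), ⟪z - x₀, EuclideanSpace.single i (1:ℝ)⟫ = (z - x₀) i := by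
    intro i; rw [EuclideanSpace.inner_single_right]; simp
  have hip : ⟪z - x₀, W⟫ = ∑ i : Fin (d+1), (z - x₀) i * W i := by
    simp [PiLp.inner_apply, RCLike.inner_apply]
    exact Finset.sum_congr rfl fun i _ => mul_comm _ _
  have hsum : ∑ i : Fin (d+1), 2 * (1-η) * ⟪z - x₀, EuclideanSpace.single i (1:ℝ)⟫
      * ⟪EuclideanSpace.single i (1:ℝ), W⟫ = 2 * (1-η) * ⟪z - x₀, W⟫ := by
    simp only [h1, h2]
    rw [hip, Finset.mul_sum]
    exact Finset.sum_congr rfl fun i _ => by ring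
  rw [hsum, inner_sub_last d x₀ hx₀d z, hz]
  rw [real_inner_self_eq_norm_sq, hW]
  have h3 : ⟪EuclideanSpace.single (Fin.last d) (1:ℝ), W⟫ = W (Fin.last d) := by
    simp [EuclideanSpace.inner_single_left]
  rw [h3]
  ring
end Phi

set_option maxHeartbeats 2000000 in
/-- the solution beats the barrier somewhere on the boundary of any
neighborhood of a point of positivity on the thin space. -/
theorem solution_exceeds_barrier
    (d : ℕ) (W : E (d+1)) (hW : ‖W‖ = 1) (hWd : 0 < W (Fin.last d))
    (v : E (d+1) → ℝ) (Λ : Set (E (d+1)))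
    (hΛ : Λ ⊆ ball 0 1 ∩ {x : E (d+1) | x (Fin.last d) = 0})
    (hvc : ContinuousOn v (closure (ball 0 1 ∩ {x : E (d+1) | 0 < x (Fin.last d)})))
    -- harmonic in B₁⁺ in the viscosity sense
    (hharmb : ∀ x₀ ∈ ball 0 1 ∩ {x : E (d+1) | 0 < x (Fin.last d)},
      ∀ φ : E (d+1) → ℝ, ContDiff ℝ (⊤ : ℕ∞) φ →
        TouchesFromBelowWithin Set.univ φ v x₀ → laplacian φ x₀ ≤ 0)
    (hharma : ∀ x₀ ∈ ball 0 1 ∩ {x : E (d+1) | 0 < x (Fin.last d)},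
      ∀ φ : E (d+1) → ℝ, ContDiff ℝ (⊤ : ℕ∞) φ →
        TouchesFromAboveWithin Set.univ φ v x₀ → 0 ≤ laplacian φ x₀)
    -- v vanishes on the contact set Λ
    (hvΛ : ∀ x ∈ Λ, v x = 0)
    -- ∇v·W = 0 on B₁' \ Λ in the viscosity sense
    (hobb : ∀ x₀ ∈ (ball 0 1 ∩ {x : E (d+1) | x (Fin.last d) = 0}) \ Λ,
      ∀ φ : E (d+1) → ℝ, ContDiff ℝ (⊤ : ℕ∞) φ →
        TouchesFromBelowWithin (closure (ball 0 1 ∩ {x : E (d+1) | 0 < x (Fin.last d)}))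
          φ v x₀ → ⟪gradient φ x₀, W⟫ ≤ 0)
    (hoba : ∀ x₀ ∈ (ball 0 1 ∩ {x : E (d+1) | x (Fin.last d) = 0}) \ Λ,
      ∀ φ : E (d+1) → ℝ, ContDiff ℝ (⊤ : ℕ∞) φ →
        TouchesFromAboveWithin (closure (ball 0 1 ∩ {x : E (d+1) | 0 < x (Fin.last d)}))
          φ v x₀ → 0 ≤ ⟪gradient φ x₀, W⟫)
    (x₀ : E (d+1)) (hx₀ : x₀ ∈ ball (0 : E (d+1)) 1) (hx₀d : x₀ (Fin.last d) = 0)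
    (hvx₀ : 0 < v x₀)
    (U : Set (E (d+1))) (hUopen : IsOpen U) (hx₀U : x₀ ∈ U)
    (hUcl : closure U ⊆ ball 0 1) :
    ∃ y ∈ frontier U, 0 < y (Fin.last d) ∧ hBarrier x₀ W y ≤ v y := by
  by_contra hcon
  push_neg at hcon
  -- constants
  set Wd := W (Fin.last d) with hWdDef
  have hWd1 : Wd ≤ 1 := by
    have h1 := abs_real_inner_le_norm (EuclideanSpace.single (Fin.last d) (1:ℝ)) W
    rw [EuclideanSpace.inner_single_left] at h1
    simp only [EuclideanSpace.norm_single, norm_one, one_mul, hW, RCLike.star_def,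
      map_one] at h1
    calc Wd ≤ |Wd| := le_abs_self _
    _ ≤ 1 := by simpa using h1
  set V := v x₀ with hVdef
  set ε := min V (Wd^2) / 8 with hεdef
  set η := ε / 8 with hηdef
  have hεpos : 0 < ε := by
    rw [hεdef]
    have := lt_min hvx₀ (pow_pos hWd 2)
    linarith
  have hηpos : 0 < η := by rw [hηdef]; linarith
  have hεV : ε ≤ V / 8 := by
    rw [hεdef]; have := min_le_left V (Wd^2); linarith
  have hεW : ε ≤ Wd^2 / 8 := by
    rw [hεdef]; have := min_le_right V (Wd^2); linarith
  clear_value Wd V ε η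
  -- continuity of the last coordinate
  have contLast : Continuous (fun x : E (d+1) => x (Fin.last d)) := (EuclideanSpace.proj (Fin.last d)).continuous
  -- sets
  set S : Set (E (d+1)) := ball 0 1 ∩ {x : E (d+1) | 0 < x (Fin.last d)} with hSdef
  set C : Set (E (d+1)) := closure S with hCdef
  set K : Set (E (d+1)) := closure (U ∩ {x : E (d+1) | 0 < x (Fin.last d)}) with hKdef
  have hSopen : IsOpen S := by
    rw [hSdef]
    exact isOpen_ball.inter (isOpen_lt continuous_const contLast)
  have hUb : U ⊆ ball (0 : E (d+1)) 1 := fun x hx => hUcl (subset_closure hx)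
  have hKC : K ⊆ C := closure_mono (fun x hx => ⟨hUb hx.1, hx.2⟩)
  have hKU : K ⊆ closure U := closure_mono inter_subset_left
  have hKball : ∀ x ∈ K, x ∈ ball (0 : E (d+1)) 1 := fun x hx => hUcl (hKU hx)
  have hKcpt : IsCompact K :=
    IsCompact.of_isClosed_subset (isCompact_closedBall 0 1) isClosed_closure
      (fun x hx => ball_subset_closedBall (hKball x hx))
  have hKpos : ∀ x ∈ K, 0 ≤ x (Fin.last d) := by
    intro x hx
    have hsub : K ⊆ {x : E (d+1) | 0 ≤ x (Fin.last d)} :=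
      closure_minimal (fun y hy => (le_of_lt hy.2 : (0:ℝ) ≤ y (Fin.last d)))
        (isClosed_le continuous_const contLast)
    exact hsub hx
  -- x₀ ∈ K
  have hx₀K : x₀ ∈ K := by
    rw [hKdef, Metric.mem_closure_iff]
    intro r hr
    obtain ⟨r', hr', hball⟩ := Metric.isOpen_iff.1 hUopen x₀ hx₀U
    set t := min r r' / 2 with htdef
    have ht : 0 < t := by rw [htdef]; have := lt_min hr hr'; positivity
    refine ⟨x₀ + EuclideanSpace.single (Fin.last d) t, ⟨hball ?_, ?_⟩, ?_⟩
    · rw [mem_ball, dist_eq_norm]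
      simp only [add_sub_cancel_left, EuclideanSpace.norm_single]
      rw [Real.norm_eq_abs, abs_of_pos ht]
      have := min_le_right r r'
      rw [htdef]; linarith
    · show 0 < (x₀ + EuclideanSpace.single (Fin.last d) t) (Fin.last d)
      have : (x₀ + EuclideanSpace.single (Fin.last d) t) (Fin.last d)
          = x₀ (Fin.last d) + t := by
        simp [EuclideanSpace.single_apply]
      rw [this, hx₀d]; linarith
    · rw [dist_eq_norm]
      simp only [sub_add_cancel_left, norm_neg, EuclideanSpace.norm_single]
      rw [Real.norm_eq_abs, abs_of_pos ht]
      have := min_le_left r r'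
      rw [htdef]; linarith
  -- the test function
  set φ0 : E (d+1) → ℝ := phiT d x₀ W ε η 0 with hφ0def
  set q : E (d+1) → ℝ := fun x => v x - φ0 x with hqdef
  have hφ0eq : ∀ x, φ0 x = hBarrier x₀ W x - ε * ⟪x - x₀, W⟫ - η * ‖x - x₀‖^2 := by
    intro x
    rw [hφ0def, phiT_eq d x₀ W hx₀d ε η 0 x]; ring
  have hq0 : q x₀ = V := by
    have h1 : hBarrier x₀ W x₀ = 0 := by
      simp [hBarrier, hx₀d]
    rw [hqdef]
    simp only [hφ0eq, h1, sub_self, inner_zero_left, norm_zero]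
    rw [hVdef]; ring
  have hqcont : ContinuousOn q K := by
    refine ContinuousOn.sub (hvc.mono hKC) ?_
    exact ((phiT_contDiff d x₀ W ε η 0).continuous.continuousOn)
  obtain ⟨z, hzK, hzmax'⟩ := hKcpt.exists_isMaxOn ⟨x₀, hx₀K⟩ hqcont
  have hzmax : ∀ x ∈ K, q x ≤ q z := fun x hx => hzmax' hx
  set M := q z with hMdef
  have hVM : V ≤ M := by rw [hMdef, ← hq0]; exact hzmax x₀ hx₀K
  clear_value M
  -- bounds valid for any point of the unit ball
  have hbnd : ∀ x ∈ ball (0 : E (d+1)) 1, ‖x - x₀‖ ≤ 2 ∧ ⟪x - x₀, W⟫ ≤ 2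
      ∧ -2 ≤ ⟪x - x₀, W⟫ := by
    intro x hx
    have h1 : ‖x - x₀‖ ≤ 2 := by
      have hx1 : ‖x‖ < 1 := mem_ball_zero_iff.1 hx
      have hx2 : ‖x₀‖ < 1 := mem_ball_zero_iff.1 hx₀
      calc ‖x - x₀‖ ≤ ‖x‖ + ‖x₀‖ := norm_sub_le x x₀
      _ ≤ 2 := by linarith
    have h2 := abs_real_inner_le_norm (x - x₀) W
    rw [hW, mul_one] at h2
    rw [abs_le] at h2
    exact ⟨h1, by linarith [h2.2], by linarith [h2.1]⟩
  set φM : E (d+1) → ℝ := phiT d x₀ W ε η M with hφMdef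
  have hφMeq : ∀ x, φM x = φ0 x + M := by
    intro x
    rw [hφMdef, hφ0def, phiT_eq d x₀ W hx₀d ε η M x, phiT_eq d x₀ W hx₀d ε η 0 x]; ring
  have htouch : ∀ s : Set (E (d+1)), (∀ᶠ x in 𝓝[s] z, x ∈ K) →
      TouchesFromAboveWithin s φM v z := by
    intro s hs
    constructor
    · rw [hφMeq z, hMdef, hqdef]; ring
    · filter_upwards [hs] with x hx
      have := hzmax x hx
      rw [hqdef] at this
      rw [hφMeq x]
      simp only at this
      linarith [this]
  have hd1 : (0:ℝ) < (d:ℝ) + 1 := by positivity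
  rcases (hKpos z hzK).lt_or_eq with hpos | hz0
  · -- z has positive last coordinate
    by_cases hzU : z ∈ U
    · -- interior point : harmonicity gives a contradiction
      have hzS : z ∈ S := ⟨hKball z hzK, hpos⟩
      have htch : TouchesFromAboveWithin Set.univ φM v z := by
        refine htouch Set.univ ?_
        rw [nhdsWithin_univ]
        filter_upwards [(hSopen.inter hUopen).mem_nhds ⟨hzS, hzU⟩] with x hx
        exact subset_closure ⟨hx.2, hx.1.2⟩
      have h0 := hharma z hzS φM (phiT_contDiff d x₀ W ε η M) htch
      rw [hφMdef, phiT_laplacian d x₀ W hW ε η M z] at h0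
      linarith [mul_pos hηpos hd1, h0]
    · -- frontier point with positive last coordinate
      have hzF : z ∈ frontier U := by
        rw [hUopen.frontier_eq]
        exact ⟨hKU hzK, hzU⟩
      have hlt := hcon z hzF hpos
      obtain ⟨hb1, hb2, hb3⟩ := hbnd z (hKball z hzK)
      have hqz : q z = v z - hBarrier x₀ W z + ε * ⟪z - x₀, W⟫ + η * ‖z - x₀‖^2 := by
        rw [hqdef]; simp only [hφ0eq]; ring
      have hnn : (0:ℝ) ≤ ‖z - x₀‖ := norm_nonneg _
      have h5 : ε * ⟪z - x₀, W⟫ ≤ ε * 2 := mul_le_mul_of_nonneg_left hb2 hεpos.le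
      have h6' : ‖z - x₀‖^2 ≤ 4 := by
        rw [sq]
        calc ‖z - x₀‖ * ‖z - x₀‖ ≤ 2 * 2 := mul_le_mul hb1 hb1 hnn (by norm_num)
        _ = 4 := by norm_num
      have h6 : η * ‖z - x₀‖^2 ≤ η * 4 := mul_le_mul_of_nonneg_left h6' hηpos.le
      have h7 : q z < 2*ε + 4*η := by rw [hqz]; linarith
      linarith [hVM, hvx₀, hεV, hηdef.ge, hMdef.le, h7]
  · -- z on the thin space
    have hzball : z ∈ ball (0 : E (d+1)) 1 := hKball z hzK
    by_cases hzΛ : z ∈ Λ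
    · -- contact point
      have hvz : v z = 0 := hvΛ z hzΛ
      have hzlast : ⟪z - x₀, EuclideanSpace.single (Fin.last d) (1:ℝ)⟫ = 0 := by
        rw [inner_sub_last d x₀ hx₀d z, ← hz0]
      have hkey : ⟪z - x₀, W⟫ = ⟪z - x₀, W - Wd • EuclideanSpace.single (Fin.last d) (1:ℝ)⟫ := by
        rw [inner_sub_right, inner_smul_right, hzlast]
        simp
      have hWs : ⟪W, EuclideanSpace.single (Fin.last d) (1:ℝ)⟫ = Wd := by
        rw [hWdDef]; simp [EuclideanSpace.inner_single_right]
      have hWnorm : ‖W - Wd • EuclideanSpace.single (Fin.last d) (1:ℝ)‖^2 = 1 - Wd^2 := by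
        rw [norm_sub_sq_real, hW, real_inner_smul_right, hWs, norm_smul,
          EuclideanSpace.norm_single, norm_one, mul_one, Real.norm_eq_abs, sq_abs]
        ring
      have hip2 : ⟪z - x₀, W⟫^2 ≤ ‖z - x₀‖^2 * (1 - Wd^2) := by
        rw [hkey]
        have h1 := abs_real_inner_le_norm (z - x₀)
          (W - Wd • EuclideanSpace.single (Fin.last d) (1:ℝ))
        have h2 : ⟪z - x₀, W - Wd • EuclideanSpace.single (Fin.last d) (1:ℝ)⟫^2
            ≤ (‖z - x₀‖ * ‖W - Wd • EuclideanSpace.single (Fin.last d) (1:ℝ)‖)^2 := by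
          rw [← sq_abs]
          exact pow_le_pow_left₀ (abs_nonneg _) h1 2
        calc ⟪z - x₀, W - Wd • EuclideanSpace.single (Fin.last d) (1:ℝ)⟫^2
            ≤ (‖z - x₀‖ * ‖W - Wd • EuclideanSpace.single (Fin.last d) (1:ℝ)‖)^2 := h2
        _ = ‖z - x₀‖^2 * (1 - Wd^2) := by rw [mul_pow, hWnorm]
      have hhb : hBarrier x₀ W z = ‖z - x₀‖^2 - ⟪z - x₀, W⟫^2 := by
        rw [hBarrier, ← hz0]; ring
      have hqz : q z = -hBarrier x₀ W z + ε * ⟪z - x₀, W⟫ + η * ‖z - x₀‖^2 := by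
        rw [hqdef]; simp only [hφ0eq, hvz]; ring
      obtain ⟨hb1, hb2, hb3⟩ := hbnd z hzball
      have habs : ⟪z - x₀, W⟫ ≤ ‖z - x₀‖ := by
        have := abs_real_inner_le_norm (z - x₀) W
        rw [hW, mul_one] at this
        linarith [le_abs_self ⟪z - x₀, W⟫]
      have hnn : (0:ℝ) ≤ ‖z - x₀‖ := norm_nonneg _
      have hW2pos : (0:ℝ) < Wd^2 := pow_pos hWd 2
      have hη2 : η ≤ Wd^2/2 := by
        have : η = ε/8 := hηdef
        linarith [hεW]
      have h2 : ε^2 ≤ ε * (Wd^2/8) := by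
        have := mul_le_mul_of_nonneg_left hεW hεpos.le
        calc ε^2 = ε * ε := sq ε ▸ rfl
        _ ≤ ε * (Wd^2/8) := this
      have s1 : (ε * ‖z - x₀‖ - (Wd^2/2) * ‖z - x₀‖^2) * (2*Wd^2)
          ≤ (ε/16) * (2*Wd^2) := by
        linarith [sq_nonneg (Wd^2 * ‖z - x₀‖ - ε), h2]
      have s1' : ε * ‖z - x₀‖ - (Wd^2/2) * ‖z - x₀‖^2 ≤ ε/16 :=
        le_of_mul_le_mul_right s1 (by linarith [hW2pos] : (0:ℝ) < 2*Wd^2)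
      have s2 : ε * ⟪z - x₀, W⟫ ≤ ε * ‖z - x₀‖ :=
        mul_le_mul_of_nonneg_left habs hεpos.le
      have s3 : η * ‖z - x₀‖^2 ≤ (Wd^2/2) * ‖z - x₀‖^2 :=
        mul_le_mul_of_nonneg_right hη2 (sq_nonneg _)
      have hfalse : q z < V := by
        rw [hqz, hhb]
        linarith [hip2, s1', s2, s3, hεV, hvx₀]
      linarith [hVM, hMdef.le, hfalse]
    · -- thin non-contact point
      by_cases hF : ∀ δ > 0, ∃ y, y ∈ frontier U ∧ 0 < y (Fin.last d) ∧ dist y z < δ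
      · -- z is a limit of good frontier points : continuity contradiction
        set T : Set (E (d+1)) := {y | y ∈ frontier U ∧ 0 < y (Fin.last d)} with hTdef
        have hzT : z ∈ closure T := by
          rw [Metric.mem_closure_iff]
          intro r hr
          obtain ⟨y, hy1, hy2, hy3⟩ := hF r hr
          exact ⟨y, ⟨hy1, hy2⟩, by rwa [dist_comm]⟩
        have hqT : ∀ y ∈ T, q y ≤ 2*ε + 4*η := by
          intro y hy
          have hylt := hcon y hy.1 hy.2
          have hyb : y ∈ ball (0 : E (d+1)) 1 := hUcl (frontier_subset_closure hy.1)
          obtain ⟨hb1, hb2, hb3⟩ := hbnd y hyb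
          have hqy : q y = v y - hBarrier x₀ W y + ε * ⟪y - x₀, W⟫ + η * ‖y - x₀‖^2 := by
            rw [hqdef]; simp only [hφ0eq]; ring
          have hnn : (0:ℝ) ≤ ‖y - x₀‖ := norm_nonneg _
          have h5 : ε * ⟪y - x₀, W⟫ ≤ ε * 2 := mul_le_mul_of_nonneg_left hb2 hεpos.le
          have h6' : ‖y - x₀‖^2 ≤ 4 := by
            rw [sq]
            calc ‖y - x₀‖ * ‖y - x₀‖ ≤ 2 * 2 := mul_le_mul hb1 hb1 hnn (by norm_num)
            _ = 4 := by norm_num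
          have h6 : η * ‖y - x₀‖^2 ≤ η * 4 := mul_le_mul_of_nonneg_left h6' hηpos.le
          linarith [hqy.le, hylt, h5, h6]
        have hcontq : ContinuousWithinAt q T z := by
          have h1 : ContinuousOn q C :=
            ContinuousOn.sub hvc ((phiT_contDiff d x₀ W ε η 0).continuous.continuousOn)
          have hTC : T ⊆ C := fun y hy =>
            subset_closure ⟨hUcl (frontier_subset_closure hy.1), hy.2⟩
          exact (h1.continuousWithinAt (hKC hzK)).mono hTC
        have hne : (𝓝[T] z).NeBot := mem_closure_iff_nhdsWithin_neBot.1 hzT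
        have hqzle : q z ≤ 2*ε + 4*η :=
          le_of_tendsto hcontq (eventually_nhdsWithin_of_forall hqT)
        have h9 : η = ε/8 := hηdef
        linarith [hVM, hqzle, hεV, hvx₀, hMdef.le]
      · -- no nearby good frontier points : the oblique condition gives a contradiction
        push_neg at hF
        obtain ⟨δ, hδ, hFδ⟩ := hF
        set B : Set (E (d+1)) := ball z δ ∩ {x : E (d+1) | 0 < x (Fin.last d)} with hBdef
        have hlin : IsLinearMap ℝ (fun x : E (d+1) => x (Fin.last d)) :=
          ⟨fun _ _ => rfl, fun _ _ => rfl⟩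
        have hBconv : Convex ℝ B := (convex_ball z δ).inter (convex_halfSpace_gt hlin 0)
        have hBU : B ⊆ U := by
          refine hBconv.isPreconnected.subset_left_of_subset_union hUopen
            isClosed_closure.isOpen_compl
            (disjoint_compl_right.mono_left subset_closure) ?_ ?_
          · intro x hx
            by_cases hxU : x ∈ U
            · exact Or.inl hxU
            · refine Or.inr fun hxcl => ?_
              have hxF : x ∈ frontier U := by
                rw [hUopen.frontier_eq]; exact ⟨hxcl, hxU⟩
              exact absurd (mem_ball.1 hx.1) (not_lt.2 (hFδ x hxF hx.2))
          · -- (B ∩ U).Nonempty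
            rw [hKdef, Metric.mem_closure_iff] at hzK
            obtain ⟨y, hy, hyd⟩ := hzK δ hδ
            exact ⟨y, ⟨⟨by rwa [mem_ball, dist_comm], hy.2⟩, hy.1⟩⟩
        have htch : TouchesFromAboveWithin C φM v z := by
          refine htouch C ?_
          filter_upwards [mem_nhdsWithin_of_mem_nhds (ball_mem_nhds z hδ),
            eventually_mem_nhdsWithin] with x hxb hxC
          have h1 : x ∈ closure (ball z δ ∩ S) :=
            isOpen_ball.inter_closure ⟨hxb, hxC⟩
          refine closure_mono ?_ h1
          intro y hy
          exact ⟨hBU ⟨hy.1, hy.2.2⟩, hy.2.2⟩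
        have h0 := hoba z ⟨⟨hzball, (by exact hz0.symm : z (Fin.last d) = 0)⟩, hzΛ⟩ φM
          (phiT_contDiff d x₀ W ε η M) htch
        rw [hφMdef, phiT_grad d x₀ W hW hx₀d ε η M z hz0.symm] at h0
        obtain ⟨hb1, hb2, hb3⟩ := hbnd z hzball
        have h9 : η = ε/8 := hηdef
        have h1 : (2*η) * (-2) ≤ (2*η) * ⟪z - x₀, W⟫ :=
          mul_le_mul_of_nonneg_left hb3 (by linarith [hηpos])
        linarith [h0, h1, hεpos]
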